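/- Define E_k by E_1 = 0 and E_k = (0.5^k·(∑_{l=2}^{k-1} C(k,l)·E_l) + 1)/(1 - 0.5^{k-1}) for k ≥ 2. Then E_k ≤ log₂(k) + 1 for all k ≥ 2. -/

import Mathlib

/-!
Strong induction on `k`. Write `log₂ l + 1 = log₂ (2l)` and bound it by the tangent line of the
concave function `log₂` at `k`: `log₂ (2l) ≤ log₂ k + (2l - k) / (k ln 2)`. Averaged against the
weights `C(k,l)`, `2 ≤ l < k`, the identities `∑ C(k,l) = 2^k - k - 2` and
`∑ l C(k,l) = k 2^(k-1) - 2k` collapse the linear term to `(k - 2) / ln 2`, and the recursion then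
reduces to the elementary inequality `k - 2 + 2 ln 2 ≤ k ln k` for `k ≥ 2`, which follows from
`ln (k/2) ≥ 1 - 2/k`.
-/

open Real Finset

theorem sum_range_succ_eq_add_sum_Ico_two {M : Type*} [AddCommMonoid M] (f : ℕ → M) {k : ℕ}
    (hk : 2 ≤ k) : ∑ l ∈ range (k + 1), f l = f 0 + f 1 + ∑ l ∈ Ico 2 k, f l + f k := by
  rw [sum_range_succ, ← sum_range_add_sum_Ico f hk]
  simp [sum_range_succ]

theorem sum_Ico_two_choose {k : ℕ} (hk : 2 ≤ k) :
    ∑ l ∈ Ico 2 k, (k.choose l : ℝ) = 2 ^ k - k - 2 := by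
  have h := congrArg (Nat.cast : ℕ → ℝ) (Nat.sum_range_choose k)
  rw [Nat.cast_sum, sum_range_succ_eq_add_sum_Ico_two _ hk] at h
  push_cast [Nat.choose_zero_right, Nat.choose_one_right, Nat.choose_self] at h
  linarith

theorem sum_Ico_two_mul_choose {k : ℕ} (hk : 2 ≤ k) :
    ∑ l ∈ Ico 2 k, (l : ℝ) * k.choose l = k * 2 ^ (k - 1) - 2 * k := by
  have h := congrArg (Nat.cast : ℕ → ℝ) (Nat.sum_range_mul_choose k)
  rw [Nat.cast_sum, sum_range_succ_eq_add_sum_Ico_two _ hk] at h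
  push_cast [Nat.choose_zero_right, Nat.choose_one_right, Nat.choose_self] at h
  linarith

theorem Real.logb_le_logb_add_div {b x y : ℝ} (hb : 1 < b) (hx : 0 < x) (hy : 0 < y) :
    logb b x ≤ logb b y + (x - y) / (y * log b) := by
  have hlogb : 0 < log b := log_pos hb
  calc logb b x = logb b y + log (x / y) / log b := by
        rw [log_div hx.ne' hy.ne', logb, logb]; ring
    _ ≤ logb b y + (x / y - 1) / log b := by
        gcongr; exact log_le_sub_one_of_pos (by positivity)
    _ = logb b y + (x - y) / (y * log b) := by field_simp

theorem sum_Ico_two_choose_mul_tangent {k : ℕ} (hk : 2 ≤ k) (L c : ℝ) (hc : c ≠ 0) :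
    ∑ l ∈ Ico 2 k, (k.choose l : ℝ) * (L + (2 * l - k) / (k * c)) =
      (2 ^ k - k - 2) * L + (k - 2) / c := by
  have hk0 : (k : ℝ) ≠ 0 := by positivity
  have hpow : (2 : ℝ) ^ k = 2 * 2 ^ (k - 1) := by
    rw [← pow_succ', Nat.sub_add_cancel (by omega)]
  simp only [mul_add, sum_add_distrib, ← sum_mul, mul_div_assoc', ← sum_div, mul_sub,
    sum_sub_distrib]
  simp only [mul_left_comm _ (2 : ℝ), ← mul_sum, mul_comm (k.choose _ : ℝ) (_ : ℕ)]
  rw [sum_Ico_two_choose hk, sum_Ico_two_mul_choose hk, hpow]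
  field_simp
  ring

theorem sub_two_add_two_mul_log_two_le {k : ℝ} (hk : 2 ≤ k) :
    k - 2 + 2 * log 2 ≤ k * log k := by
  have hk0 : 0 < k := by positivity
  have h : 1 - (k / 2)⁻¹ ≤ log (k / 2) := one_sub_inv_le_log_of_pos (by positivity)
  rw [log_div hk0.ne' two_ne_zero, inv_div] at h
  have hmul : k * (1 - 2 / k) = k - 2 := by field_simp
  nlinarith [mul_le_mul_of_nonneg_left h hk0.le, log_pos one_lt_two]

theorem sum_Ico_two_choose_mul_le_of_le_logb_add_one {k : ℕ} (hk : 2 ≤ k) {e : ℕ → ℝ}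
    (he : ∀ l ∈ Ico 2 k, e l ≤ logb 2 l + 1) :
    ∑ l ∈ Ico 2 k, (k.choose l : ℝ) * e l ≤ (2 ^ k - k - 2) * logb 2 k + (k - 2) / log 2 := by
  have hk0 : (0 : ℝ) < k := by positivity
  rw [← sum_Ico_two_choose_mul_tangent hk _ _ (log_pos one_lt_two).ne']
  refine sum_le_sum fun l hl => mul_le_mul_of_nonneg_left ?_ (Nat.cast_nonneg _)
  have hl0 : (0 : ℝ) < l := by have := (mem_Ico.1 hl).1; positivity
  calc e l ≤ logb 2 l + 1 := he l hl
    _ = logb 2 (2 * l) := by rw [logb_mul two_ne_zero hl0.ne', logb_self_eq_one one_lt_two]; ring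
    _ ≤ logb 2 k + (2 * l - k) / (k * log 2) :=
        logb_le_logb_add_div one_lt_two (by positivity) hk0

theorem binarySplitting_rhs_le_logb_add_one {k : ℕ} (hk : 2 ≤ k) {e : ℕ → ℝ}
    (he : ∀ l ∈ Ico 2 k, e l ≤ logb 2 l + 1) :
    ((0.5 : ℝ) ^ k * (∑ l ∈ Ico 2 k, (k.choose l : ℝ) * e l) + 1) / (1 - (0.5 : ℝ) ^ (k - 1))
      ≤ logb 2 k + 1 := by
  set x : ℝ := (0.5 : ℝ) ^ k
  have hx : 0 < x := by positivity
  have hx2 : x * 2 ^ k = 1 := by rw [← mul_pow]; norm_num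
  have hpred : (0.5 : ℝ) ^ (k - 1) = 2 * x := by
    rw [show x = 0.5 ^ (k - 1) * 0.5 by rw [← pow_succ, Nat.sub_add_cancel (by omega)]]; ring
  have hlog : (k - 2) / log 2 + 2 ≤ k * logb 2 k := by
    have hlog2 := log_pos one_lt_two
    rw [logb, ← mul_div_assoc, le_div_iff₀ hlog2, add_mul, div_mul_cancel₀ _ hlog2.ne']
    exact sub_two_add_two_mul_log_two_le (by exact_mod_cast hk)
  have hS := mul_le_mul_of_nonneg_left (sum_Ico_two_choose_mul_le_of_le_logb_add_one hk he) hx.le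
  have hxlog := mul_le_mul_of_nonneg_left hlog hx.le
  have hden : 0 < 1 - 2 * x := by
    have : (0.5 : ℝ) ^ (k - 1) < 1 := pow_lt_one₀ (by norm_num) (by norm_num) (by omega)
    linarith
  rw [hpred, div_le_iff₀ hden]
  linear_combination hS + hxlog + logb 2 k * hx2

theorem stmt_8_general (E : ℕ → ℝ)
    (hrec : ∀ k, 2 ≤ k →
      E k = ((0.5 : ℝ) ^ k * (∑ l ∈ Finset.Ico 2 k, (k.choose l : ℝ) * E l) + 1)
              / (1 - (0.5 : ℝ) ^ (k - 1))) :
    ∀ k, 2 ≤ k → E k ≤ Real.logb 2 k + 1 := by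
  intro k
  induction k using Nat.strong_induction_on with
  | _ k ih =>
    intro hk
    rw [hrec k hk]
    exact binarySplitting_rhs_le_logb_add_one hk fun l hl => ih l (mem_Ico.1 hl).2 (mem_Ico.1 hl).1

/-- If `E 1 = 0` and `E k = (0.5^k (∑_{l=2}^{k-1} C(k,l) E l) + 1)/(1 - 0.5^{k-1})`
for `k ≥ 2`, then `E k ≤ log₂ k + 1` for all `k ≥ 2`. -/
theorem stmt_8 (E : ℕ → ℝ) (h1 : E 1 = 0)
    (hrec : ∀ k, 2 ≤ k →
      E k = ((0.5 : ℝ) ^ k * (∑ l ∈ Finset.Ico 2 k, (k.choose l : ℝ) * E l) + 1)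
              / (1 - (0.5 : ℝ) ^ (k - 1))) :
    ∀ k, 2 ≤ k → E k ≤ Real.logb 2 k + 1 :=
  stmt_8_general E hrec
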